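/- Let X be a compact Hausdorff space, A a unital C*-algebra, A1 ⊆ A a C*-subalgebra, and Y1 ⊆ X a closed subset. Then B := { f ∈ C(X, A) : f(x) ∈ A1 for all x ∈ Y1 } is a C*-subalgebra of C(X, A), and it is a C(X)-algebra under pointwise multiplication by C(X). Moreover for x ∉ Y1 the fiber B_x := B/(C_x(X)·B) is isomorphic to A, while for x in the interior of Y1 the fiber is isomorphic to A1. -/
import Mathlib

/-- Pointwise multiplication of a continuous scalar function with a continuous `A`-valued
function. -/
noncomputable def cSmul {X A : Type*} [TopologicalSpace X]
    [NormedRing A] [NormedAlgebra ℂ A]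
    (g : C(X, ℂ)) (f : C(X, A)) : C(X, A) :=
  ⟨fun x => g x • f x, g.continuous.smul f.continuous⟩

/-- The kernel of evaluation at `x` on `B` is the closure of `C_x(X)·B`. -/
lemma kernel_lemma {X A : Type*} [TopologicalSpace X] [CompactSpace X] [T2Space X]
    [NormedRing A] [NormedAlgebra ℂ A]
    (B : Set C(X, A)) (x : X) (f : C(X, A)) (hf : f ∈ B) :
    (f x = 0 ↔ f ∈ closure (↑(Submodule.span ℂ
      {h : C(X, A) | ∃ g : C(X, ℂ), ∃ k ∈ B, g x = 0 ∧ h = cSmul g k}) : Set C(X, A))) := by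
  set S : Set C(X, A) :=
    {h : C(X, A) | ∃ g : C(X, ℂ), ∃ k ∈ B, g x = 0 ∧ h = cSmul g k} with hS
  constructor
  · intro hfx
    rw [Metric.mem_closure_iff]
    intro ε hε
    -- the set where ‖f‖ ≥ ε/2 is closed and avoids x
    set K : Set X := {y : X | ε / 2 ≤ ‖f y‖} with hK
    have hKclosed : IsClosed K := isClosed_le continuous_const (f.continuous.norm)
    have hxK : x ∉ K := by
      simp only [hK, Set.mem_setOf_eq, hfx, norm_zero, not_le]
      linarith
    obtain ⟨g, hg0, hg1, hg01⟩ := exists_continuous_zero_one_of_isClosed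
      (isClosed_singleton (x := x)) hKclosed
      (Set.disjoint_singleton_left.mpr hxK)
    set g' : C(X, ℂ) := ⟨fun y => ((g y : ℝ) : ℂ), Complex.continuous_ofReal.comp g.continuous⟩
      with hg'
    refine ⟨cSmul g' f, Submodule.subset_span
        ⟨g', f, hf, by simp [hg', hg0 (Set.mem_singleton x)], rfl⟩, ?_⟩
    · have key : dist f (cSmul g' f) ≤ ε / 2 := by
        rw [ContinuousMap.dist_le (by positivity)]
        intro y
        have : f y - g' y • f y = ((1 : ℂ) - g' y) • f y := by
          rw [sub_smul, one_smul]
        rw [dist_eq_norm]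
        show ‖f y - g' y • f y‖ ≤ ε / 2
        rw [this, norm_smul]
        by_cases hy : y ∈ K
        · have : g y = 1 := hg1 hy
          simp [hg', this]
          positivity
        · have h1 : ‖f y‖ ≤ ε / 2 := le_of_lt (by simpa [hK, not_le] using hy)
          have h2 : ‖(1 : ℂ) - g' y‖ ≤ 1 := by
            have := hg01 y
            simp only [Set.mem_Icc] at this
            have : ‖(1 : ℂ) - ((g y : ℝ) : ℂ)‖ = |1 - g y| := by
              rw [← Complex.ofReal_one, ← Complex.ofReal_sub, Complex.norm_real,
                Real.norm_eq_abs]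
            rw [hg']
            simp only [ContinuousMap.coe_mk, this]
            rw [abs_le]
            constructor <;> [linarith [(hg01 y).2]; linarith [(hg01 y).1]]
          calc ‖(1 : ℂ) - g' y‖ * ‖f y‖ ≤ 1 * (ε / 2) :=
                mul_le_mul h2 h1 (norm_nonneg _) zero_le_one
            _ = ε / 2 := one_mul _
      linarith
  · intro hmem
    have hclosed : IsClosed {h : C(X, A) | h x = 0} :=
      isClosed_eq (continuous_eval_const x) continuous_const
    have hsub : (↑(Submodule.span ℂ S) : Set C(X, A)) ⊆ {h : C(X, A) | h x = 0} := by
      intro h hh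
      refine Submodule.span_induction ?_ ?_ ?_ ?_ hh
      · rintro h ⟨g, k, -, hgx, rfl⟩
        simp [cSmul, hgx]
      · simp
      · intro a b _ _ ha hb
        simp only [Set.mem_setOf_eq, ContinuousMap.add_apply] at *
        rw [ha, hb, add_zero]
      · intro c a _ ha
        simp only [Set.mem_setOf_eq, ContinuousMap.smul_apply] at *
        rw [ha, smul_zero]
    exact (closure_minimal hsub hclosed) hmem

/-- For `X` compact Hausdorff, `A1 ⊆ A` a closed *-subalgebra and `Y1 ⊆ X`
closed, `B := { f ∈ C(X, A) : f(Y1) ⊆ A1 }` is a C*-subalgebra of `C(X, A)` stable under the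
pointwise `C(X)`-action; its fiber at `x ∉ Y1` is `A` and at `x ∈ int Y1` it is `A1`
(evaluation is surjective onto `A` resp. `A1`, with kernel the ideal `C_x(X)·B`). -/
theorem statement11 {X A : Type*} [TopologicalSpace X] [CompactSpace X] [T2Space X]
    [NormedRing A] [StarRing A] [CStarRing A] [NormedAlgebra ℂ A] [StarModule ℂ A] [CompleteSpace A]
    (A1 : StarSubalgebra ℂ A) (hA1closed : IsClosed (A1 : Set A))
    (Y1 : Set X) (hY1 : IsClosed Y1)
    (B : Set C(X, A)) (hB : B = {f : C(X, A) | ∀ x ∈ Y1, f x ∈ A1}) :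
    -- B is a closed unital *-subalgebra of C(X, A)
    (1 : C(X, A)) ∈ B ∧
    (∀ f ∈ B, ∀ g ∈ B, f + g ∈ B) ∧ (∀ f ∈ B, ∀ g ∈ B, f * g ∈ B) ∧
    (∀ f ∈ B, star f ∈ B) ∧ (∀ (c : ℂ), ∀ f ∈ B, c • f ∈ B) ∧ IsClosed B ∧
    -- B is a C(X)-algebra under pointwise multiplication
    (∀ (g : C(X, ℂ)), ∀ f ∈ B, cSmul g f ∈ B) ∧
    -- fiber over x ∉ Y1 is A: evaluation is surjective with kernel C_x(X)·B
    (∀ x ∉ Y1,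
      {a : A | ∃ f ∈ B, f x = a} = Set.univ ∧
      ∀ f ∈ B, (f x = 0 ↔ f ∈ closure (↑(Submodule.span ℂ
        {h : C(X, A) | ∃ g : C(X, ℂ), ∃ k ∈ B, g x = 0 ∧ h = cSmul g k}) : Set C(X, A)))) ∧
    -- fiber over x in the interior of Y1 is A1
    (∀ x ∈ interior Y1,
      {a : A | ∃ f ∈ B, f x = a} = (A1 : Set A) ∧
      ∀ f ∈ B, (f x = 0 ↔ f ∈ closure (↑(Submodule.span ℂ
        {h : C(X, A) | ∃ g : C(X, ℂ), ∃ k ∈ B, g x = 0 ∧ h = cSmul g k}) : Set C(X, A)))) := by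
  subst hB
  refine ⟨?_, ?_, ?_, ?_, ?_, ?_, ?_, ?_, ?_⟩
  · intro x _; simpa using A1.one_mem
  · intro f hf g hg x hx; simpa using A1.add_mem (hf x hx) (hg x hx)
  · intro f hf g hg x hx; simpa using A1.mul_mem (hf x hx) (hg x hx)
  · intro f hf x hx; simpa using star_mem (hf x hx)
  · intro c f hf x hx; simpa using A1.smul_mem (hf x hx) c
  · have : {f : C(X, A) | ∀ x ∈ Y1, f x ∈ A1} =
        ⋂ y ∈ Y1, {f : C(X, A) | f y ∈ (A1 : Set A)} := by
      ext f; simp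
    rw [this]
    exact isClosed_biInter fun y _ =>
      hA1closed.preimage (continuous_eval_const y)
  · intro g f hf x hx
    exact A1.smul_mem (hf x hx) (g x)
  · intro x hx
    refine ⟨?_, fun f hf => kernel_lemma _ x f hf⟩
    ext a
    simp only [Set.mem_setOf_eq, Set.mem_univ, iff_true]
    obtain ⟨g, hg0, hg1, hg01⟩ := exists_continuous_zero_one_of_isClosed hY1
      (isClosed_singleton (x := x)) (Set.disjoint_singleton_right.mpr hx)
    set g' : C(X, ℂ) := ⟨fun y => ((g y : ℝ) : ℂ), Complex.continuous_ofReal.comp g.continuous⟩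
    refine ⟨cSmul g' (ContinuousMap.const X a), ?_, ?_⟩
    · intro y hy
      simp only [cSmul, ContinuousMap.coe_mk, ContinuousMap.const_apply]
      have : g y = 0 := hg0 hy
      simp only [ContinuousMap.coe_mk, this, Complex.ofReal_zero, zero_smul, g']
      exact zero_mem A1
    · simp only [cSmul, ContinuousMap.coe_mk, ContinuousMap.const_apply]
      have : g x = 1 := hg1 (Set.mem_singleton x)
      simp [g', this]
  · intro x hx
    refine ⟨?_, fun f hf => kernel_lemma _ x f hf⟩
    ext a
    simp only [Set.mem_setOf_eq, SetLike.mem_coe]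
    constructor
    · rintro ⟨f, hf, rfl⟩
      exact hf x (interior_subset hx)
    · intro ha
      exact ⟨ContinuousMap.const X a, fun y _ => ha, rfl⟩
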